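/- arXiv:2603.04504 — 5 statements merged into one kernel-verified Lean document; each statement's English description precedes it below -/
import Mathlib

section
/- For all natural numbers k and a, the sum over all k-tuples (q_1,…,q_k) of nonnegative integers of the product ∏_{l=1}^{k} C₀(l−1+a−∑_{i=1}^{l−1} q_i, q_l) equals k!·(k+1)^a. (Every nonzero summand satisfies q_1+⋯+q_k ≤ a+k−1, so the sum may equivalently be taken over the finite set of tuples with q_1+⋯+q_k ≤ a+k−1.) -/
/-- `C₀(a,b)`: binomial coefficient `a choose b` for an integer `a` and natural `b`,
with the convention that it vanishes whenever `a < 0` (and also when `b > a`). -/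
def C0 (a : ℤ) (b : ℕ) : ℕ := if 0 ≤ a then a.toNat.choose b else 0

/-! Splitting off the first coordinate `q₁ = x`, the product factors as `C(a, x)` times the same
product for the remaining `k - 1` coordinates with `a` replaced by `a + 1 - x`. By induction on `k`
the inner sum is `(k-1)! k^(a+1-x)`, and the binomial theorem gives
`∑ₓ C(a, x) k^(a+1-x) = k (k+1)^a`. -/

open Finset

theorem Finset.Nat.antidiagonalTuple_eq_finAntidiagonal (k n : ℕ) :
    Nat.antidiagonalTuple k n = finAntidiagonal k n := by
  ext
  simp [Nat.mem_antidiagonalTuple]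

theorem Finset.Nat.sum_antidiagonalTuple_succ {M : Type*} [AddCommMonoid M] (k n : ℕ)
    (f : (Fin (k + 1) → ℕ) → M) :
    ∑ q ∈ Nat.antidiagonalTuple (k + 1) n, f q =
      ∑ p ∈ antidiagonal n, ∑ q ∈ Nat.antidiagonalTuple k p.2, f (Fin.cons p.1 q) := by
  simp only [Nat.antidiagonalTuple_eq_finAntidiagonal]
  -- `finAntidiagonal (k + 1) n` is defined as a disjoint union of images of `Fin.cons`
  rw [finAntidiagonal, finAntidiagonal.aux, sum_disjiUnion]
  simp only [sum_map]
  rfl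

theorem Finset.Nat.sum_range_sum_antidiagonalTuple_succ {M : Type*} [AddCommMonoid M]
    (k N : ℕ) (f : (Fin (k + 1) → ℕ) → M) :
    ∑ s ∈ range N, ∑ q ∈ Nat.antidiagonalTuple (k + 1) s, f q =
      ∑ x ∈ range N, ∑ t ∈ range (N - x), ∑ q ∈ Nat.antidiagonalTuple k t, f (Fin.cons x q) := by
  simp only [Nat.sum_antidiagonalTuple_succ,
    Nat.sum_antidiagonal_eq_sum_range_succ fun x t => ∑ q ∈ Nat.antidiagonalTuple k t,
      f (Fin.cons x q)]
  exact sum_range_diag_flip N fun x t => ∑ q ∈ Nat.antidiagonalTuple k t, f (Fin.cons x q)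

theorem Fin.sum_Iio_succ {M : Type*} [AddCommMonoid M] {k : ℕ} (g : Fin (k + 1) → M)
    (j : Fin k) : ∑ i ∈ Iio j.succ, g i = g 0 + ∑ i ∈ Iio j, g i.succ := by
  rw [← Finset.Ico_bot, bot_eq_zero, ← Finset.Ioo_insert_left (Fin.succ_pos j),
    ← Fin.map_succEmb_Iio, sum_insert (by simp), sum_map]
  rfl

theorem Nat.sum_range_choose_mul_pow_add_one_sub (m b N : ℕ) (h : b ≤ N) :
    ∑ x ∈ range (N + 1), b.choose x * m ^ (b + 1 - x) = m * (m + 1) ^ b := by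
  rw [← sum_subset (range_subset_range.2 (Nat.succ_le_succ h)) fun x _ hx => by
    rw [Nat.choose_eq_zero_of_lt (by simpa using hx), zero_mul]]
  rw [add_comm m 1, add_pow, mul_sum]
  refine sum_congr rfl fun x hx => ?_
  rw [one_pow, one_mul, Nat.cast_id, Nat.sub_add_comm (by simpa [Nat.lt_succ_iff] using hx),
    pow_succ]
  ring

theorem C0_natCast (b x : ℕ) : C0 b x = b.choose x := by
  simp [C0]

def binomChain {k : ℕ} (b : ℤ) (q : Fin k → ℕ) : ℕ :=
  ∏ l : Fin k, C0 ((l : ℤ) + b - ∑ i ∈ Iio l, (q i : ℤ)) (q l)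

theorem binomChain_cons {k : ℕ} (b : ℤ) (x : ℕ) (q : Fin k → ℕ) :
    binomChain b (Fin.cons x q : Fin (k + 1) → ℕ) = C0 b x * binomChain (b + 1 - x) q := by
  rw [binomChain, binomChain, Fin.prod_univ_succ]
  congr 1
  · rw [show Iio (0 : Fin (k + 1)) = ∅ from Iio_eq_empty.mpr isMin_bot]
    simp
  · refine prod_congr rfl fun j _ => ?_
    rw [Fin.sum_Iio_succ]
    simp only [Fin.cons_zero, Fin.cons_succ, Fin.val_succ]
    congr 1
    push_cast
    ring

-- Tuples of nonzero weight have total at most `b + k - 1`, so the cutoff `N` only has to exceed it.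
theorem sum_range_sum_antidiagonalTuple_binomChain (k b N : ℕ) (h : b + k ≤ N + 1) :
    ∑ s ∈ range (N + 1), ∑ q ∈ Nat.antidiagonalTuple k s, binomChain b q =
      k.factorial * (k + 1) ^ b := by
  induction k generalizing b N with
  | zero => simp [sum_range_succ', binomChain]
  | succ k ih =>
    have inner (x : ℕ) (hx : x ≤ b) :
        ∑ t ∈ range (N + 1 - x), ∑ q ∈ Nat.antidiagonalTuple k t, binomChain (b + 1 - x : ℤ) q =
          k.factorial * (k + 1) ^ (b + 1 - x) := by
      rw [show N + 1 - x = N - x + 1 by omega, show (b + 1 - x : ℤ) = (b + 1 - x : ℕ) by omega]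
      exact ih _ _ (by omega)
    calc ∑ s ∈ range (N + 1), ∑ q ∈ Nat.antidiagonalTuple (k + 1) s, binomChain b q
        = ∑ x ∈ range (N + 1), b.choose x *
            ∑ t ∈ range (N + 1 - x), ∑ q ∈ Nat.antidiagonalTuple k t,
              binomChain (b + 1 - x : ℤ) q := by
          simp only [Nat.sum_range_sum_antidiagonalTuple_succ, binomChain_cons, C0_natCast,
            mul_sum]
      _ = ∑ x ∈ range (N + 1), b.choose x * (k.factorial * (k + 1) ^ (b + 1 - x)) := by
          refine sum_congr rfl fun x _ => ?_
          rcases le_or_gt x b with hx | hx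
          · rw [inner x hx]
          · rw [Nat.choose_eq_zero_of_lt hx, zero_mul, zero_mul]
      _ = (k + 1).factorial * (k + 2) ^ b := by
          simp only [mul_left_comm _ k.factorial, ← mul_sum,
            Nat.sum_range_choose_mul_pow_add_one_sub _ b N (by omega), Nat.factorial_succ]
          ring

/-- For all naturals `k, a`,
`∑_{(q₁,…,q_k)} ∏_{l=1}^{k} C₀(l-1+a-∑_{i<l} qᵢ, q_l) = k! (k+1)^a`,
where the sum runs over the finite set of `k`-tuples of nonnegative integers
with `q₁+⋯+q_k ≤ a+k-1` (which contains the support of the summand). -/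
theorem sum_weak_comp_binomial (k a : ℕ) :
    ∑ s ∈ Finset.range (a + k - 1 + 1), ∑ q ∈ Finset.Nat.antidiagonalTuple k s,
      ∏ l : Fin k, C0 ((l : ℤ) + a - ∑ i ∈ Finset.Iio l, (q i : ℤ)) (q l)
      = k.factorial * (k + 1) ^ a :=
  sum_range_sum_antidiagonalTuple_binomChain k a (a + k - 1) (by omega)
end

section
/- Let n ≥ 1 be a natural number, let Γ, τ₀ be nonnegative reals, and let μ : ℕ → ℝ be a sequence of nonnegative reals with μ_0 = 1 and μ_i ≤ i!·τ₀^i for all integers 1 ≤ i ≤ n. Then ε_n ≤ Γ^{n+1}·τ₀^n·n!·C(2n−1, n), where C(·,·) is the usual binomial coefficient. -/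
/-!
Each of the `C(2n-1, n)` weak compositions `q` of `n` into `n` parts contributes at most
`Γ^n ∏ qᵢ! τ₀^{qᵢ} = Γ^n τ₀^n ∏ qᵢ!`, and `∏ qᵢ! ≤ (∑ qᵢ)! = n!` because the multinomial
coefficient `n! / ∏ qᵢ!` is a positive integer.
-/

/-- `ε_n := Γ ∑_{(q₁,…,q_n) ∈ W_n^n} ∏_{i=1}^n (Γ μ_{qᵢ})`, summing over weak
compositions of `n` into `n` parts (so `ε_0 = Γ`). -/
noncomputable def eps (Γ : ℝ) (μ : ℕ → ℝ) (n : ℕ) : ℝ :=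
  Γ * ∑ q ∈ Finset.Nat.antidiagonalTuple n n, ∏ i : Fin n, (Γ * μ (q i))

open Finset Nat

theorem Finset.Nat.card_antidiagonalTuple (k n : ℕ) :
    #(antidiagonalTuple k n) = (k + n - 1).choose n := by
  rw [card_eq_of_equiv_fintype ((Equiv.subtypeEquivRight fun _ => mem_antidiagonalTuple).trans
    (Sym.equivNatSumOfFintype (Fin k) n).symm), Sym.card_sym_eq_choose, Fintype.card_fin]

theorem Nat.prod_factorial_le_factorial_sum {ι : Type*} (s : Finset ι) (f : ι → ℕ) :
    ∏ i ∈ s, (f i)! ≤ (∑ i ∈ s, f i)! :=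
  le_of_dvd (factorial_pos _) (prod_factorial_dvd_factorial_sum s f)

theorem prod_le_factorial_mul_pow_of_mem_antidiagonalTuple {k n : ℕ} {μ : ℕ → ℝ} {τ : ℝ}
    (hτ : 0 ≤ τ) (hμnonneg : ∀ i, 0 ≤ μ i) (hμ : ∀ i ≤ n, μ i ≤ i ! * τ ^ i)
    {q : Fin k → ℕ} (hq : q ∈ antidiagonalTuple k n) :
    ∏ i, μ (q i) ≤ n ! * τ ^ n := by
  have hsum : ∑ i, q i = n := mem_antidiagonalTuple.mp hq
  have hle : ∀ i, q i ≤ n := fun i => hsum ▸ single_le_sum (by simp) (mem_univ i)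
  calc ∏ i, μ (q i) ≤ ∏ i, ((q i)! * τ ^ q i) :=
        prod_le_prod (fun i _ => hμnonneg _) fun i _ => hμ _ (hle i)
    _ = ((∏ i, (q i)! : ℕ) : ℝ) * τ ^ n := by
        rw [prod_mul_distrib, prod_pow_eq_pow_sum, hsum]; push_cast; rfl
    _ ≤ n ! * τ ^ n := by
        gcongr
        exact_mod_cast hsum ▸ prod_factorial_le_factorial_sum univ q

theorem eps_le_binom_general (n : ℕ) (Γ τ₀ : ℝ) (hΓ : 0 ≤ Γ) (hτ : 0 ≤ τ₀)
    (μ : ℕ → ℝ) (hμ0 : μ 0 = 1) (hμnonneg : ∀ i, 0 ≤ μ i)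
    (hμ : ∀ i, 1 ≤ i → i ≤ n → μ i ≤ i.factorial * τ₀ ^ i) :
    eps Γ μ n ≤ Γ ^ (n + 1) * τ₀ ^ n * n.factorial * ((2 * n - 1).choose n) := by
  have hμ' : ∀ i ≤ n, μ i ≤ i ! * τ₀ ^ i := fun i hi => by
    rcases i.eq_zero_or_pos with rfl | hpos
    · simp [hμ0]
    · exact hμ i hpos hi
  have hterm : ∀ q ∈ antidiagonalTuple n n, ∏ i, (Γ * μ (q i)) ≤ Γ ^ n * (n ! * τ₀ ^ n) := by
    intro q hq
    rw [prod_mul_distrib, prod_const, Finset.card_fin]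
    gcongr
    exact prod_le_factorial_mul_pow_of_mem_antidiagonalTuple hτ hμnonneg hμ' hq
  calc eps Γ μ n ≤ Γ * (#(antidiagonalTuple n n) • (Γ ^ n * (n ! * τ₀ ^ n))) := by
        unfold eps
        gcongr
        exact sum_le_card_nsmul _ _ _ hterm
    _ = Γ ^ (n + 1) * τ₀ ^ n * n ! * ((2 * n - 1).choose n) := by
        rw [card_antidiagonalTuple, nsmul_eq_mul, show n + n - 1 = 2 * n - 1 by omega]
        ring

/-- If `n ≥ 1`, `Γ, τ₀ ≥ 0`, `μ` is nonnegative with `μ 0 = 1` and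
`μ i ≤ i! τ₀^i` for `1 ≤ i ≤ n`, then `ε_n ≤ Γ^{n+1} τ₀^n n! C(2n-1, n)`. -/
theorem eps_le_binom (n : ℕ) (hn : 1 ≤ n) (Γ τ₀ : ℝ) (hΓ : 0 ≤ Γ) (hτ : 0 ≤ τ₀)
    (μ : ℕ → ℝ) (hμ0 : μ 0 = 1) (hμnonneg : ∀ i, 0 ≤ μ i)
    (hμ : ∀ i, 1 ≤ i → i ≤ n → μ i ≤ i.factorial * τ₀ ^ i) :
    eps Γ μ n ≤ Γ ^ (n + 1) * τ₀ ^ n * n.factorial * ((2 * n - 1).choose n) :=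
  eps_le_binom_general n Γ τ₀ hΓ hτ μ hμ0 hμnonneg hμ
end

section
/- Let n be a natural number, let Γ, τ₀ be nonnegative reals, and let μ : ℕ → ℝ be a sequence of nonnegative reals with μ_0 = 1 and μ_i ≤ i!·τ₀^i for all integers 1 ≤ i ≤ n. Then ε_n ≤ Γ·(4Γτ₀)^n·n!. -/
open Finset Nat

theorem Finset.Nat.card_antidiagonalTuple_self_le_four_pow (n : ℕ) :
    #(antidiagonalTuple n n) ≤ 4 ^ n := by
  rw [card_antidiagonalTuple]
  exact (choose_le_choose n (by omega)).trans (centralBinom_le_four_pow n)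

theorem Finset.prod_le_factorial_sum_mul_pow_sum {ι : Type*} (s : Finset ι) (q : ι → ℕ)
    {μ : ℕ → ℝ} {τ : ℝ} (hτ : 0 ≤ τ) (hμ_nonneg : ∀ j, 0 ≤ μ j)
    (hμ : ∀ j ≤ ∑ i ∈ s, q i, μ j ≤ j ! * τ ^ j) :
    ∏ i ∈ s, μ (q i) ≤ (∑ i ∈ s, q i)! * τ ^ ∑ i ∈ s, q i := by
  have hfact : ((∏ i ∈ s, (q i)! : ℕ) : ℝ) ≤ (∑ i ∈ s, q i)! := by
    exact_mod_cast le_of_dvd (factorial_pos _) (prod_factorial_dvd_factorial_sum s q)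
  calc ∏ i ∈ s, μ (q i)
      ≤ ∏ i ∈ s, ((q i)! * τ ^ q i) :=
        prod_le_prod (fun i _ => hμ_nonneg _)
          fun i hi => hμ _ (single_le_sum (fun j _ => Nat.zero_le (q j)) hi)
    _ = (∏ i ∈ s, (q i)! : ℕ) * τ ^ ∑ i ∈ s, q i := by
        rw [prod_mul_distrib, prod_pow_eq_pow_sum]; push_cast; rfl
    _ ≤ (∑ i ∈ s, q i)! * τ ^ ∑ i ∈ s, q i := by gcongr

/-- If `Γ, τ₀ ≥ 0`, `μ` is nonnegative with `μ 0 = 1` and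
`μ i ≤ i! τ₀^i` for `1 ≤ i ≤ n`, then `ε_n ≤ Γ (4Γτ₀)^n n!`. -/
theorem eps_le (n : ℕ) (Γ τ₀ : ℝ) (hΓ : 0 ≤ Γ) (hτ : 0 ≤ τ₀)
    (μ : ℕ → ℝ) (hμ0 : μ 0 = 1) (hμnonneg : ∀ i, 0 ≤ μ i)
    (hμ : ∀ i, 1 ≤ i → i ≤ n → μ i ≤ i.factorial * τ₀ ^ i) :
    eps Γ μ n ≤ Γ * (4 * Γ * τ₀) ^ n * n.factorial := by
  have hμ' : ∀ j ≤ n, μ j ≤ j ! * τ₀ ^ j := fun j hj => by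
    rcases j.eq_zero_or_pos with rfl | hj0
    · simp [hμ0]
    · exact hμ j hj0 hj
  have hterm : ∀ q ∈ Finset.Nat.antidiagonalTuple n n, ∏ i, μ (q i) ≤ n ! * τ₀ ^ n := by
    intro q hq
    rw [Finset.Nat.mem_antidiagonalTuple] at hq
    simpa [hq] using
      prod_le_factorial_sum_mul_pow_sum univ q hτ hμnonneg fun j hj => hμ' j (hq ▸ hj)
  have hcard : (#(Finset.Nat.antidiagonalTuple n n) : ℝ) ≤ 4 ^ n := by
    exact_mod_cast Finset.Nat.card_antidiagonalTuple_self_le_four_pow n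
  calc eps Γ μ n = Γ * Γ ^ n * ∑ q ∈ Finset.Nat.antidiagonalTuple n n, ∏ i, μ (q i) := by
        simp [eps, prod_mul_distrib, mul_sum, mul_assoc]
    _ ≤ Γ * Γ ^ n * (#(Finset.Nat.antidiagonalTuple n n) * (n ! * τ₀ ^ n)) := by
        gcongr
        simpa using sum_le_card_nsmul _ _ _ hterm
    _ ≤ Γ * Γ ^ n * (4 ^ n * (n ! * τ₀ ^ n)) := by gcongr
    _ = Γ * (4 * Γ * τ₀) ^ n * n.factorial := by ring
end

section
/- Let M : ℕ → ℝ be a nonnegative sequence and let g : ℕ → ℕ → ℝ be a nonnegative doubly-indexed family satisfying: (i) g(0,j) ≤ M(j) for all j ∈ ℕ, and (ii) g(m,j) ≤ ∑_{k=0}^{j} C(j,k)·g(0,k)·g(m−1, j−k+1) for all m ≥ 1 and all j ∈ ℕ. Then for all m, j ∈ ℕ: g(m,j) ≤ ∑ over m-tuples (k_1,…,k_m) of nonnegative integers with k_1+⋯+k_m ≤ j+m−1 of M(j+m−∑_{i=1}^{m} k_i) · ∏_{l=1}^{m} C₀(j+l−1−∑_{i=1}^{l−1} k_i, k_l)·M(k_l).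 -/
/-!
Induction on `m`. Prepending `k` to a tuple `t` of length `m` turns the weight of `t` at level
`j - k + 1` into the weight of `Fin.cons k t` at level `j`, up to the factor `C(j,k) M(k)`, because
the arguments `j + l - ∑_{i<l} kᵢ` of `C₀` shift accordingly. So one application of the recursion
to the bound for `m` reproduces exactly the terms of the bound for `m + 1` whose first entry is at
most `j`; the remaining terms are nonnegative.
-/

open Finset

lemma Fin.sum_Iio_succ_cons {α M : Type*} [AddCommMonoid M] {m : ℕ} (f : α → M) (a : α)
    (v : Fin m → α) (l : Fin m) :
    ∑ i ∈ Iio l.succ, f ((Fin.cons a v : Fin (m + 1) → α) i) = f a + ∑ i ∈ Iio l, f (v i) := by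
  rw [Iio_eq_Ico, bot_eq_zero, Ico_eq_cons_Ioo (Fin.succ_pos l), Finset.sum_cons,
    ← Fin.map_succEmb_Iio, sum_map]
  simp only [Fin.cons_zero, Fin.coe_succEmb, Fin.cons_succ]

lemma Finset.Nat.sum_range_sum_antidiagonalTuple_cons_le {R : Type*} [AddCommMonoid R]
    [PartialOrder R] [IsOrderedAddMonoid R] {m K B : ℕ} (N : ℕ → ℕ) (hN : ∀ k ≤ K, k + N k ≤ B)
    (f : ℕ → (Fin (m + 1) → ℕ) → R) (hf : ∀ s t, 0 ≤ f s t) :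
    ∑ k ∈ range (K + 1), ∑ s ∈ range (N k + 1), ∑ t ∈ Nat.antidiagonalTuple m s,
        f (k + s) (Fin.cons k t)
      ≤ ∑ s ∈ range (B + 1), ∑ t ∈ Nat.antidiagonalTuple (m + 1) s, f s t := by
  set S := (range (K + 1)).sigma fun k => (range (N k + 1)).sigma (Nat.antidiagonalTuple m)
  let e : (Σ _ : ℕ, Σ _ : ℕ, Fin m → ℕ) → Σ _ : ℕ, Fin (m + 1) → ℕ :=
    fun p => ⟨p.1 + p.2.1, Fin.cons p.1 p.2.2⟩
  have he : Set.InjOn e S := by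
    rintro ⟨k, s, t⟩ hp ⟨k', s', t'⟩ hp' hpe
    simp only [S, coe_sigma, Set.mem_sigma_iff, mem_coe, mem_range,
      Nat.mem_antidiagonalTuple] at hp hp'
    simp only [e, Sigma.mk.inj_iff, heq_eq_eq, Fin.cons_inj] at hpe
    obtain ⟨-, rfl, rfl⟩ := hpe
    obtain rfl : s = s' := hp.2.2.symm.trans hp'.2.2
    rfl
  have hsub : S.image e ⊆ (range (B + 1)).sigma (Nat.antidiagonalTuple (m + 1)) := by
    simp only [subset_iff, mem_image, S, mem_sigma, mem_range, Nat.mem_antidiagonalTuple]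
    rintro _ ⟨⟨k, s, t⟩, ⟨hk, hs, hst⟩, rfl⟩
    dsimp only at hk hs hst
    subst hst
    simp only [e]
    refine ⟨by have := hN k (by omega); omega, ?_⟩
    simp [Fin.sum_univ_succ]
  calc _ = ∑ p ∈ S, f (e p).1 (e p).2 := by simp only [S, e, sum_sigma]
    _ = ∑ q ∈ S.image e, f q.1 q.2 := (sum_image (f := fun q => f q.1 q.2) he).symm
    _ ≤ ∑ q ∈ (range (B + 1)).sigma (Nat.antidiagonalTuple (m + 1)), f q.1 q.2 :=
      sum_le_sum_of_subset_of_nonneg hsub fun q _ _ => hf q.1 q.2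
    _ = _ := sum_sigma _ _ _

noncomputable def weakCompWeight (M : ℕ → ℝ) (j : ℕ) {m : ℕ} (t : Fin m → ℕ) : ℝ :=
  ∏ l : Fin m, (C0 ((j : ℤ) + (l : ℤ) - ∑ i ∈ Iio l, (t i : ℤ)) (t l) : ℝ) * M (t l)

noncomputable def weakCompExpansion (M : ℕ → ℝ) (m j : ℕ) : ℝ :=
  ∑ s ∈ range (j + m - 1 + 1), ∑ t ∈ Nat.antidiagonalTuple m s,
    M (j + m - s) * weakCompWeight M j t

lemma weakCompWeight_nonneg {M : ℕ → ℝ} (hM : ∀ j, 0 ≤ M j) (j : ℕ) {m : ℕ} (t : Fin m → ℕ) :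
    0 ≤ weakCompWeight M j t :=
  prod_nonneg fun _ _ => mul_nonneg (Nat.cast_nonneg _) (hM _)

lemma weakCompWeight_cons (M : ℕ → ℝ) {j k : ℕ} (hk : k ≤ j) {m : ℕ} (t : Fin m → ℕ) :
    weakCompWeight M j (Fin.cons k t : Fin (m + 1) → ℕ)
      = j.choose k * M k * weakCompWeight M (j - k + 1) t := by
  rw [weakCompWeight, Fin.prod_univ_succ, weakCompWeight]
  refine congrArg₂ (· * ·) ?_ (prod_congr rfl fun l _ => ?_)
  · rw [Iio_eq_Ico, bot_eq_zero, Ico_self]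
    simp [C0]
  · rw [Fin.sum_Iio_succ_cons, Fin.cons_succ, Fin.val_succ]
    congr 3
    push_cast [hk]
    ring

lemma weakCompExpansion_zero (M : ℕ → ℝ) (j : ℕ) : weakCompExpansion M 0 j = M j := by
  rw [weakCompExpansion, sum_eq_single_of_mem 0 (by simp)]
  · simp [Nat.antidiagonalTuple_zero_zero, weakCompWeight]
  · intro s _ hs
    obtain ⟨s, rfl⟩ := Nat.exists_eq_succ_of_ne_zero hs
    simp [Nat.antidiagonalTuple_zero_succ]

lemma sum_choose_mul_weakCompExpansion_le {M : ℕ → ℝ} (hM : ∀ j, 0 ≤ M j) (m j : ℕ) :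
    ∑ k ∈ range (j + 1), j.choose k * M k * weakCompExpansion M m (j - k + 1)
      ≤ weakCompExpansion M (m + 1) j := by
  have hN : ∀ k ≤ j, k + ((j - k + 1) + m - 1) ≤ j + (m + 1) - 1 := fun k hk => by omega
  refine le_of_eq_of_le ?_ <| Nat.sum_range_sum_antidiagonalTuple_cons_le _ hN
    (fun s t => M (j + (m + 1) - s) * weakCompWeight M j t)
    (fun s t => mul_nonneg (hM _) (weakCompWeight_nonneg hM j t))
  refine sum_congr rfl fun k hk => ?_
  have hkj : k ≤ j := Nat.lt_succ_iff.mp (mem_range.mp hk)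
  rw [weakCompExpansion, mul_sum]
  refine sum_congr rfl fun s _ => ?_
  rw [mul_sum]
  refine sum_congr rfl fun t _ => ?_
  rw [weakCompWeight_cons M hkj, show j + (m + 1) - (k + s) = j - k + 1 + m - s by omega]
  ring

/-- Let `M : ℕ → ℝ` be nonnegative and `g : ℕ → ℕ → ℝ` nonnegative with
`g 0 j ≤ M j` and `g m j ≤ ∑_{k=0}^{j} C(j,k) g(0,k) g(m-1, j-k+1)` for `m ≥ 1`. Then
`g m j ≤ ∑_{k₁+⋯+k_m ≤ j+m-1} M(j+m-∑kᵢ) ∏_{l=1}^m C₀(j+l-1-∑_{i<l}kᵢ, k_l) M(k_l)`. -/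
theorem g_le_weak_comp_expansion (M : ℕ → ℝ) (hM : ∀ j, 0 ≤ M j)
    (g : ℕ → ℕ → ℝ) (hg : ∀ m j, 0 ≤ g m j)
    (h0 : ∀ j, g 0 j ≤ M j)
    (hrec : ∀ m, 1 ≤ m → ∀ j, g m j ≤
      ∑ k ∈ Finset.range (j + 1), (j.choose k : ℝ) * g 0 k * g (m - 1) (j - k + 1)) :
    ∀ m j, g m j ≤
      ∑ s ∈ Finset.range (j + m - 1 + 1), ∑ kt ∈ Finset.Nat.antidiagonalTuple m s,
        M (j + m - s) *
          ∏ l : Fin m,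
            (C0 ((j : ℤ) + (l : ℤ) - ∑ i ∈ Finset.Iio l, (kt i : ℤ)) (kt l) : ℝ) * M (kt l) := by
  intro m
  change ∀ j, g m j ≤ weakCompExpansion M m j
  induction m with
  | zero => simpa only [weakCompExpansion_zero] using h0
  | succ m ih =>
    intro j
    calc g (m + 1) j
        ≤ ∑ k ∈ range (j + 1), j.choose k * g 0 k * g m (j - k + 1) :=
          hrec (m + 1) (Nat.le_add_left 1 m) j
      _ ≤ ∑ k ∈ range (j + 1), j.choose k * M k * weakCompExpansion M m (j - k + 1) := by
        gcongr with k
        · exact hg _ _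
        · exact mul_nonneg (Nat.cast_nonneg _) (hM k)
        · exact h0 k
        · exact ih _
      _ ≤ weakCompExpansion M (m + 1) j := sum_choose_mul_weakCompExpansion_le hM m j
end

section
/- Let I and J be nonempty finite types and consider complex square matrices indexed by I×J. For a matrix M indexed by I×J, define its partial trace over J to be the I-indexed matrix Tr_J(M) with entries (Tr_J M)(i,i') := ∑_{j∈J} M((i,j),(i',j)). Then for all complex matrices X, M, Y indexed by I×J: ‖Tr_J(X·M·Y)‖_tr ≤ ‖X‖·‖Y‖·‖M‖_tr, where ‖A‖_tr := Tr((Aᴴ·A)^{1/2}) is the trace norm (with (·)^{1/2} the positive semidefinite square root of the positive semidefinite matrix Aᴴ·A, and Aᴴ the conjugate transpose), and ‖·‖ is the ℓ²→ℓ² operator norm on matrices. -/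
open scoped ComplexOrder

/-- The partial trace over the second factor: `(Tr_J M)(i,i') = ∑_j M((i,j),(i',j))`. -/
noncomputable def partialTrace {I J : Type*} [Fintype J] (M : Matrix (I × J) (I × J) ℂ) :
    Matrix I I ℂ :=
  fun i i' => ∑ j : J, M (i, j) (i', j)

/-- The trace norm `‖A‖_tr = Tr((Aᴴ A)^{1/2})`, where `(·)^{1/2}` is the positive
semidefinite square root of the positive semidefinite matrix `Aᴴ A`. -/
noncomputable def traceNorm {n : Type*} [Fintype n] [DecidableEq n]
    (A : Matrix n n ℂ) : ℝ :=
  (Matrix.trace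
    (((Matrix.posSemidef_conjTranspose_mul_self A).1.eigenvectorUnitary : Matrix n n ℂ) *
      Matrix.diagonal (fun i => ((Real.sqrt
        ((Matrix.posSemidef_conjTranspose_mul_self A).1.eigenvalues i) : ℝ) : ℂ)) *
      (star (Matrix.posSemidef_conjTranspose_mul_self A).1.eigenvectorUnitary :
        Matrix n n ℂ))).re

/-- The `ℓ² → ℓ²` operator norm of a square complex matrix. -/
noncomputable def opNorm {n : Type*} [Fintype n] [DecidableEq n]
    (A : Matrix n n ℂ) : ℝ :=
  ‖Matrix.toEuclideanCLM (𝕜 := ℂ) A‖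


/-! The trace norm is dual to the operator norm: `‖A‖_tr = max {|Tr (W A)| : ‖W‖ ≤ 1}`.
Both directions come from a singular value decomposition `A = V Σ U*` with `U` unitary and
`V` a contraction: `|Tr (C A)| = |∑ₖ (U* C V)ₖₖ σₖ| ≤ ‖C‖ ∑ₖ σₖ`, and `W = U V*` attains
the bound.

Against a contraction `W`, `Tr (W Tr_J N) = Tr ((W ⊗ 1) N)`, and `W ↦ W ⊗ 1` is a
`*`-homomorphism of C⋆-algebras, hence contractive; so `‖Tr_J N‖_tr ≤ ‖N‖_tr`. Similarly
`Tr (W X M Y) = Tr ((Y W X) M)` gives `‖X M Y‖_tr ≤ ‖X‖ ‖Y‖ ‖M‖_tr`. -/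

open Matrix
open scoped Matrix.Norms.L2Operator Kronecker

theorem Matrix.norm_entry_le_l2_opNorm {𝕜 m n : Type*} [RCLike 𝕜] [Fintype m] [Fintype n]
    [DecidableEq m] [DecidableEq n] (A : Matrix m n 𝕜) (i : m) (j : n) : ‖A i j‖ ≤ ‖A‖ := by
  have hentry : A i j = inner 𝕜 (EuclideanSpace.single i 1)
      ((EuclideanSpace.equiv m 𝕜).symm (A *ᵥ Pi.single j 1)) := by
    simp [EuclideanSpace.inner_single_left]
  have hcol := A.l2_opNorm_mulVec (EuclideanSpace.single j 1)
  rw [PiLp.norm_single, norm_one, mul_one] at hcol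
  calc ‖A i j‖ ≤ ‖EuclideanSpace.single i (1 : 𝕜)‖ *
        ‖(EuclideanSpace.equiv m 𝕜).symm (A *ᵥ Pi.single j 1)‖ :=
        hentry ▸ norm_inner_le_norm _ _
    _ ≤ ‖A‖ := by
        rw [PiLp.norm_single, norm_one, one_mul]
        simpa using hcol

section TraceNorm

variable {n : Type*} [Fintype n] [DecidableEq n]

theorem opNorm_eq_l2_opNorm (A : Matrix n n ℂ) : opNorm A = ‖A‖ := rfl

/-- Indexed by the eigenvectors of `Aᴴ * A`, in no particular order. -/
noncomputable def singularValues (A : Matrix n n ℂ) (k : n) : ℝ :=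
  √((posSemidef_conjTranspose_mul_self A).1.eigenvalues k)

theorem singularValues_nonneg (A : Matrix n n ℂ) (k : n) : 0 ≤ singularValues A k :=
  Real.sqrt_nonneg _

theorem traceNorm_eq_sum_singularValues (A : Matrix n n ℂ) :
    traceNorm A = ∑ k, singularValues A k := by
  have hU := (posSemidef_conjTranspose_mul_self A).1.eigenvectorUnitary.2
  rw [traceNorm, trace_mul_cycle, Unitary.star_mul_self_of_mem hU, one_mul, trace_diagonal,
    Complex.re_sum]
  simp [singularValues]

theorem traceNorm_nonneg (A : Matrix n n ℂ) : 0 ≤ traceNorm A := by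
  rw [traceNorm_eq_sum_singularValues]
  exact Finset.sum_nonneg fun k _ => singularValues_nonneg A k

/-- Normalising the nonzero columns of `B` gives a partial isometry `V`. -/
theorem exists_norm_le_one_eq_mul_diagonal {B : Matrix n n ℂ} {s : n → ℝ}
    (hB : Bᴴ * B = diagonal (fun k => (s k : ℂ) * s k)) :
    ∃ V : Matrix n n ℂ, ‖V‖ ≤ 1 ∧
      Vᴴ * V * diagonal (fun k => (s k : ℂ)) = diagonal (fun k => (s k : ℂ)) ∧
      B = V * diagonal (fun k => (s k : ℂ)) := by
  set d : n → ℂ := fun k => (s k : ℂ)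
  have hker : B * diagonal (1 - d⁻¹ * d) = 0 := by
    rw [← conjTranspose_mul_self_eq_zero, conjTranspose_mul, mul_assoc, ← mul_assoc Bᴴ, hB,
      diagonal_conjTranspose, diagonal_mul_diagonal, diagonal_mul_diagonal, diagonal_eq_zero]
    funext k
    rcases eq_or_ne (d k) 0 with h | h <;> simp [d, h]
  have hVV : (B * diagonal d⁻¹)ᴴ * (B * diagonal d⁻¹) = diagonal (d * d⁻¹) := by
    rw [conjTranspose_mul, mul_assoc, ← mul_assoc Bᴴ, hB, diagonal_conjTranspose,
      diagonal_mul_diagonal, diagonal_mul_diagonal]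
    congr 1
    funext k
    rcases eq_or_ne (d k) 0 with h | h <;> simp [d] at h ⊢ <;> field_simp
  refine ⟨B * diagonal d⁻¹, ?_, ?_, ?_⟩
  · have hnorm := l2_opNorm_conjTranspose_mul_self (B * diagonal d⁻¹)
    have hproj : ‖d * d⁻¹‖ ≤ 1 := (pi_norm_le_iff_of_nonneg zero_le_one).mpr fun k => by
      rcases eq_or_ne (d k) 0 with h | h <;> simp [h]
    rw [hVV, l2_opNorm_diagonal] at hnorm
    nlinarith [norm_nonneg (B * diagonal d⁻¹)]
  · rw [hVV, diagonal_mul_diagonal]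
    congr 1
    funext k
    rcases eq_or_ne (d k) 0 with h | h <;> simp [h]
  · calc B = B * diagonal (d⁻¹ * d) + B * diagonal (1 - d⁻¹ * d) := by
          rw [← mul_add, diagonal_add]
          simp
      _ = B * diagonal d⁻¹ * diagonal d := by
          rw [hker, add_zero, mul_assoc, diagonal_mul_diagonal]
          rfl

theorem exists_singularValueDecomposition (A : Matrix n n ℂ) :
    ∃ U ∈ unitary (Matrix n n ℂ), ∃ V : Matrix n n ℂ, ‖V‖ ≤ 1 ∧
      Vᴴ * V * diagonal (fun k => (singularValues A k : ℂ)) =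
        diagonal (fun k => (singularValues A k : ℂ)) ∧
      A = V * diagonal (fun k => (singularValues A k : ℂ)) * star U := by
  have hA := posSemidef_conjTranspose_mul_self A
  set U : Matrix n n ℂ := ↑hA.1.eigenvectorUnitary
  have hU : U ∈ unitary (Matrix n n ℂ) := hA.1.eigenvectorUnitary.2
  have hgram : (A * U)ᴴ * (A * U) =
      diagonal (fun k => (singularValues A k : ℂ) * singularValues A k) := by
    have h := hA.1.conjStarAlgAut_star_eigenvectorUnitary
    rw [Unitary.conjStarAlgAut_star_apply] at h
    rw [conjTranspose_mul, ← star_eq_conjTranspose, mul_assoc, ← mul_assoc Aᴴ, ← mul_assoc, h]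
    congr 1
    funext k
    simp [singularValues, ← Complex.ofReal_mul, Real.mul_self_sqrt (hA.eigenvalues_nonneg k)]
  obtain ⟨V, hV, hVV, hAU⟩ := exists_norm_le_one_eq_mul_diagonal hgram
  refine ⟨U, hU, V, hV, hVV, ?_⟩
  rw [← hAU, mul_assoc, Unitary.mul_star_self_of_mem hU, mul_one]

theorem norm_trace_mul_le (C A : Matrix n n ℂ) : ‖trace (C * A)‖ ≤ ‖C‖ * traceNorm A := by
  obtain ⟨U, hU, V, hV, -, hA⟩ := exists_singularValueDecomposition A
  nth_rewrite 1 [hA]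
  have hUCV : ‖star U * C * V‖ ≤ ‖C‖ :=
    calc ‖star U * C * V‖ ≤ ‖star U * C‖ * ‖V‖ := norm_mul_le _ _
      _ ≤ ‖C‖ * 1 := by
        rw [CStarRing.norm_mem_unitary_mul C (Unitary.star_mem hU)]
        gcongr
      _ = ‖C‖ := mul_one _
  rw [← mul_assoc, ← mul_assoc, trace_mul_comm, ← mul_assoc, ← mul_assoc,
    traceNorm_eq_sum_singularValues, Finset.mul_sum]
  simp only [trace, diag, mul_diagonal]
  refine (norm_sum_le _ _).trans (Finset.sum_le_sum fun k _ => ?_)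
  rw [norm_mul, Complex.norm_real, Real.norm_of_nonneg (singularValues_nonneg A k)]
  exact mul_le_mul_of_nonneg_right ((norm_entry_le_l2_opNorm _ k k).trans hUCV)
    (singularValues_nonneg A k)

theorem exists_norm_le_one_trace_mul_eq_traceNorm (A : Matrix n n ℂ) :
    ∃ W : Matrix n n ℂ, ‖W‖ ≤ 1 ∧ trace (W * A) = traceNorm A := by
  obtain ⟨U, hU, V, hV, hVV, hA⟩ := exists_singularValueDecomposition A
  refine ⟨U * Vᴴ, ?_, ?_⟩
  · rwa [CStarRing.norm_mem_unitary_mul _ hU, l2_opNorm_conjTranspose]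
  · nth_rewrite 1 [hA]
    rw [show U * Vᴴ * (V * diagonal (fun k => (singularValues A k : ℂ)) * star U) =
        U * (Vᴴ * V * diagonal (fun k => (singularValues A k : ℂ))) * star U by
          simp only [mul_assoc],
      hVV, trace_mul_cycle, Unitary.star_mul_self_of_mem hU, one_mul, trace_diagonal,
      traceNorm_eq_sum_singularValues, Complex.ofReal_sum]

theorem traceNorm_le_of_norm_trace_mul_le {A : Matrix n n ℂ} {c : ℝ}
    (h : ∀ W : Matrix n n ℂ, ‖W‖ ≤ 1 → ‖trace (W * A)‖ ≤ c) : traceNorm A ≤ c := by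
  obtain ⟨W, hW, hWA⟩ := exists_norm_le_one_trace_mul_eq_traceNorm A
  simpa [hWA, abs_of_nonneg (traceNorm_nonneg A)] using h W hW

theorem traceNorm_mul_mul_le (X M Y : Matrix n n ℂ) :
    traceNorm (X * M * Y) ≤ ‖X‖ * ‖Y‖ * traceNorm M := by
  refine traceNorm_le_of_norm_trace_mul_le fun W hW => ?_
  have hcycle : trace (W * (X * M * Y)) = trace (Y * W * X * M) := by
    rw [← mul_assoc, trace_mul_comm]
    simp only [mul_assoc]
  have hYWX : ‖Y * W * X‖ ≤ ‖X‖ * ‖Y‖ :=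
    calc ‖Y * W * X‖ ≤ ‖Y‖ * ‖W‖ * ‖X‖ := norm_mul₃_le
      _ ≤ ‖Y‖ * 1 * ‖X‖ := by gcongr
      _ = ‖X‖ * ‖Y‖ := by ring
  rw [hcycle]
  exact (norm_trace_mul_le _ M).trans (mul_le_mul_of_nonneg_right hYWX (traceNorm_nonneg M))

end TraceNorm

section PartialTrace

variable {I J : Type*} [Fintype I] [Fintype J] [DecidableEq J]

variable (J) in
noncomputable def kroneckerOneStarAlgHom (R : Type*) [CommSemiring R] [StarRing R]
    [DecidableEq I] : Matrix I I R →⋆ₐ[R] Matrix (I × J) (I × J) R where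
  toFun W := W ⊗ₖ 1
  map_one' := one_kronecker_one
  map_mul' W W' := by rw [← mul_kronecker_mul, mul_one]
  map_zero' := zero_kronecker _
  map_add' W W' := add_kronecker W W' 1
  commutes' c := by simp [Algebra.algebraMap_eq_smul_one, smul_kronecker]
  map_star' W := by simp [star_eq_conjTranspose, conjTranspose_kronecker]

theorem norm_kronecker_one_le [DecidableEq I] (W : Matrix I I ℂ) :
    ‖W ⊗ₖ (1 : Matrix J J ℂ)‖ ≤ ‖W‖ :=
  NonUnitalStarAlgHom.norm_apply_le (kroneckerOneStarAlgHom J ℂ) W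

theorem trace_mul_partialTrace (W : Matrix I I ℂ) (N : Matrix (I × J) (I × J) ℂ) :
    trace (W * partialTrace N) = trace (W ⊗ₖ (1 : Matrix J J ℂ) * N) := by
  simp only [trace, diag, mul_apply, partialTrace, kronecker_apply, one_apply,
    Fintype.sum_prod_type, mul_ite, mul_one, mul_zero, ite_mul, zero_mul,
    Finset.sum_ite_eq, Finset.mem_univ, if_true, Finset.mul_sum]
  exact Finset.sum_congr rfl fun i _ => Finset.sum_comm

theorem traceNorm_partialTrace_le_traceNorm [DecidableEq I] (N : Matrix (I × J) (I × J) ℂ) :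
    traceNorm (partialTrace N) ≤ traceNorm N := by
  refine traceNorm_le_of_norm_trace_mul_le fun W hW => ?_
  rw [trace_mul_partialTrace]
  calc _ ≤ ‖W ⊗ₖ (1 : Matrix J J ℂ)‖ * traceNorm N := norm_trace_mul_le _ N
    _ ≤ 1 * traceNorm N := by
        gcongr
        · exact traceNorm_nonneg N
        · exact (norm_kronecker_one_le W).trans hW
    _ = traceNorm N := one_mul _

end PartialTrace

theorem traceNorm_partialTrace_le_general {I J : Type*}
    [Fintype I] [Fintype J] [DecidableEq I] [DecidableEq J]
    (X M Y : Matrix (I × J) (I × J) ℂ) :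
    traceNorm (partialTrace (X * M * Y)) ≤ opNorm X * opNorm Y * traceNorm M := by
  rw [opNorm_eq_l2_opNorm, opNorm_eq_l2_opNorm]
  exact (traceNorm_partialTrace_le_traceNorm _).trans (traceNorm_mul_mul_le X M Y)

/-- For complex matrices `X, M, Y` indexed by `I × J`,
`‖Tr_J(X M Y)‖_tr ≤ ‖X‖ ‖Y‖ ‖M‖_tr`. -/
theorem traceNorm_partialTrace_le {I J : Type*}
    [Fintype I] [Fintype J] [Nonempty I] [Nonempty J] [DecidableEq I] [DecidableEq J]
    (X M Y : Matrix (I × J) (I × J) ℂ) :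
    traceNorm (partialTrace (X * M * Y)) ≤ opNorm X * opNorm Y * traceNorm M :=
  traceNorm_partialTrace_le_general X M Y
end
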